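/- Let F = (f_1,...,f_m) be a sequence of homogeneous polynomials of positive degrees d_1,...,d_m in R = K[x_1,...,x_n], and let d ≥ max{d_i}. If F is d-regular, then the module of syzygies of F agrees with the module of trivial (Koszul) syzygies in all degrees strictly below d: syz(F)_{<d} = tsyz(F)_{<d}. -/

import Mathlib

open MvPolynomial

namespace GBPaper

/-- The dimension of the degree-`d` homogeneous piece of `R/I`,
where `R = K[x_i : i ∈ σ]`. -/
noncomputable def hilbertFn (K : Type*) [Field K] {σ : Type*}
    (I : Ideal (MvPolynomial σ K)) (d : ℕ) : ℕ :=
  Module.finrank K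
    ((MvPolynomial.homogeneousSubmodule σ K d).map
      (Ideal.Quotient.mkₐ K I).toLinearMap)

/-- An ideal is homogeneous iff it contains all homogeneous components of its elements. -/
def IsHomogeneousIdeal {K : Type*} [Field K] {σ : Type*}
    (I : Ideal (MvPolynomial σ K)) : Prop :=
  ∀ f ∈ I, ∀ d : ℕ, MvPolynomial.homogeneousComponent d f ∈ I

/-- The degree of regularity: the least `d` with `R_d = I_d`. -/
noncomputable def degReg (K : Type*) [Field K] {σ : Type*}
    (I : Ideal (MvPolynomial σ K)) : ℕ :=
  sInf {d : ℕ | ∀ f : MvPolynomial σ K, f.IsHomogeneous d → f ∈ I}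

/-- The generalized degree of regularity: the least `d₀` from which on the Hilbert
function of `R/I` is constant. -/
noncomputable def gdegReg (K : Type*) [Field K] {σ : Type*}
    (I : Ideal (MvPolynomial σ K)) : ℕ :=
  sInf {d₀ : ℕ | ∀ d : ℕ, d₀ ≤ d → hilbertFn K I d = hilbertFn K I d₀}

/-- The leading monomial (leading exponent) of a polynomial with respect to a
monomial order. -/
noncomputable def lm {K : Type*} [Field K] {σ : Type*} (m : MonomialOrder σ)
    (f : MvPolynomial σ K) : σ →₀ ℕ :=
  m.toSyn.symm (f.support.sup fun s => m.toSyn s)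

/-- A monomial order is graded (degree-compatible) if it refines total degree. -/
def MonIsGraded {σ : Type*} (m : MonomialOrder σ) : Prop :=
  ∀ a b : σ →₀ ℕ, a.degree < b.degree → m.toSyn a < m.toSyn b

/-- `G` is the reduced Gröbner basis of `I` with respect to the monomial order `m`. -/
structure IsReducedGB {K : Type*} [Field K] {σ : Type*} (m : MonomialOrder σ)
    (I : Ideal (MvPolynomial σ K)) (G : Finset (MvPolynomial σ K)) : Prop where
  subset : (G : Set (MvPolynomial σ K)) ⊆ I
  zero_not_mem : (0 : MvPolynomial σ K) ∉ G
  monic : ∀ g ∈ G, MvPolynomial.coeff (lm m g) g = 1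
  isGB : ∀ f ∈ I, f ≠ 0 → ∃ g ∈ G, lm m g ≤ lm m f
  reduced : ∀ g ∈ G, ∀ g' ∈ G, g ≠ g' → ∀ s ∈ g.support, ¬ lm m g' ≤ s

/-- The degree reverse lexicographic order with `x_0 ≻ x_1 ≻ ⋯`. -/
def IsDegRevLex {n : ℕ} (m : MonomialOrder (Fin n)) : Prop :=
  ∀ a b : Fin n →₀ ℕ, m.toSyn a < m.toSyn b ↔
    (a.degree < b.degree ∨
      (a.degree = b.degree ∧ ∃ i, b i < a i ∧ ∀ j, i < j → a j = b j))

/-- Restriction of an exponent vector on `n+1` variables to the first `n` variables. -/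
noncomputable def restr {n : ℕ} (a : Fin (n + 1) →₀ ℕ) : Fin n →₀ ℕ :=
  Finsupp.equivFunOnFinite.symm fun i => a i.castSucc

/-- Extension of an exponent vector on `n` variables to `n+1` variables (with
`y`-exponent `0`). -/
noncomputable def extX {n : ℕ} (a : Fin n →₀ ℕ) : Fin (n + 1) →₀ ℕ :=
  Finsupp.embDomain Fin.castSuccEmb a

/-- `m'` is the homogenization (w.r.t. the last variable `y`) of the graded
monomial order `m₀`: it compares first total degrees, then the `X`-parts using `m₀`. -/
def IsHomogenizationOrder {n : ℕ} (m' : MonomialOrder (Fin (n + 1)))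
    (m₀ : MonomialOrder (Fin n)) : Prop :=
  ∀ a b : Fin (n + 1) →₀ ℕ, m'.toSyn a < m'.toSyn b ↔
    (a.degree < b.degree ∨
      (a.degree = b.degree ∧ m₀.toSyn (restr a) < m₀.toSyn (restr b)))

/-- The top part (maximal total degree part) of a polynomial. -/
noncomputable def topPart {K : Type*} [Field K] {σ : Type*}
    (f : MvPolynomial σ K) : MvPolynomial σ K :=
  MvPolynomial.homogeneousComponent f.totalDegree f

/-- The homogenization of `f ∈ K[x_1,…,x_n]` by the extra (last) variable `y`. -/
noncomputable def homog {K : Type*} [Field K] {n : ℕ}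
    (f : MvPolynomial (Fin n) K) : MvPolynomial (Fin (n + 1)) K :=
  ∑ s ∈ f.support,
    MvPolynomial.monomial
      (extX s + Finsupp.single (Fin.last n) (f.totalDegree - s.degree))
      (f.coeff s)

/-- The last variable `y` used for homogenization. -/
noncomputable def yvar (K : Type*) [Field K] (n : ℕ) : MvPolynomial (Fin (n + 1)) K :=
  MvPolynomial.X (Fin.last n)

/-- Substituting `y = 0`, the "top part" of a homogeneous polynomial in `R[y]`. -/
noncomputable def setYZero {K : Type*} [Field K] {n : ℕ}
    (g : MvPolynomial (Fin (n + 1)) K) : MvPolynomial (Fin (n + 1)) K :=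
  MvPolynomial.aeval
    (fun i => if i = Fin.last n then 0 else MvPolynomial.X i) g

/-- The ideal generated by the polynomials `f j` for `j < i`. -/
noncomputable def prevIdeal {K : Type*} [Field K] {σ : Type*} {M : ℕ}
    (f : Fin M → MvPolynomial σ K) (i : Fin M) : Ideal (MvPolynomial σ K) :=
  Ideal.span (f '' {j | j < i})

/-- `d`-regularity of a sequence of homogeneous polynomials of degrees `dg`. -/
def IsDRegularSeq {K : Type*} [Field K] {σ : Type*} {M : ℕ}
    (f : Fin M → MvPolynomial σ K) (dg : Fin M → ℕ) (d : ℕ) : Prop :=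
  ∀ i : Fin M, ∀ g : MvPolynomial σ K, ∀ e : ℕ,
    g.IsHomogeneous e → e + dg i < d →
    g * f i ∈ prevIdeal f i → g ∈ prevIdeal f i

/-- Semi-regularity (Pardue): each multiplication map on graded pieces of the
successive quotients is injective or surjective. -/
def IsSemiRegularSeq {K : Type*} [Field K] {σ : Type*} {M : ℕ}
    (f : Fin M → MvPolynomial σ K) (dg : Fin M → ℕ) : Prop :=
  ∀ i : Fin M, ∀ t : ℕ, dg i ≤ t →
    (∀ g : MvPolynomial σ K, g.IsHomogeneous (t - dg i) →
        g * f i ∈ prevIdeal f i → g ∈ prevIdeal f i) ∨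
    (∀ h : MvPolynomial σ K, h.IsHomogeneous t →
        ∃ g : MvPolynomial σ K, g.IsHomogeneous (t - dg i) ∧
          h - g * f i ∈ prevIdeal f i)

/-- The power series `∏ (1 - z^{d_i}) / (1-z)^n` over `ℤ`. -/
noncomputable def semiRegSeries (n : ℕ) {M : ℕ} (dg : Fin M → ℕ) : PowerSeries ℤ :=
  (∏ i : Fin M, (1 - (PowerSeries.X : PowerSeries ℤ) ^ dg i)) *
    ((PowerSeries.invOneSubPow ℤ n : (PowerSeries ℤ)ˣ) : PowerSeries ℤ)

/-- The cutoff of the truncation `[·]`: the first index with a nonpositive coefficient. -/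
noncomputable def truncCutoff (P : PowerSeries ℤ) : ℕ :=
  sInf {t : ℕ | PowerSeries.coeff t P ≤ 0}

/-- The coefficient of `z^t` in the series `[P]` obtained by truncating `P` after
the last consecutive positive coefficient. -/
noncomputable def truncCoeff (P : PowerSeries ℤ) (t : ℕ) : ℤ :=
  if t < truncCutoff P then PowerSeries.coeff t P else 0

section Koszul

variable {K : Type*} [Field K] {σ : Type*} {M : ℕ}

/-- Index set of the degree-`i` part of the Koszul complex on `M` polynomials. -/
abbrev KIdx (M i : ℕ) := {s : Finset (Fin M) // s.card = i}

/-- The Koszul differential `K_{i+1} → K_i` of the Koszul complex on `f`. -/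
noncomputable def koszulD (f : Fin M → MvPolynomial σ K) (i : ℕ)
    (v : KIdx M (i + 1) → MvPolynomial σ K) :
    KIdx M i → MvPolynomial σ K :=
  fun t => ∑ j : Fin M,
    if h : j ∈ t.val then 0
    else ((-1 : MvPolynomial σ K) ^ (t.val.filter (fun l => l < j)).card) * f j *
      v ⟨insert j t.val, by rw [Finset.card_insert_of_notMem h, t.prop]⟩

/-- A Koszul `i`-chain is homogeneous of (internal) degree `d`: each component at a
subset `s` is homogeneous of degree `d - ∑_{j ∈ s} dg j` (and zero if `d` is smaller
than this shift). -/
def KChainHom (dg : Fin M → ℕ) (i : ℕ)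
    (v : KIdx M i → MvPolynomial σ K) (d : ℕ) : Prop :=
  ∀ t : KIdx M i,
    (v t).IsHomogeneous (d - ∑ j ∈ t.val, dg j) ∧
    (d < ∑ j ∈ t.val, dg j → v t = 0)

/-- A Koszul `i`-cycle: an `i`-chain killed by the Koszul differential
(every `0`-chain is a cycle). -/
def IsKCycle (f : Fin M → MvPolynomial σ K) :
    (i : ℕ) → (KIdx M i → MvPolynomial σ K) → Prop
  | 0, _ => True
  | (i + 1), v => koszulD f i v = 0

/-- The degree-`d` part of the `i`-th Koszul homology of `f` vanishes:
every homogeneous cycle of degree `d` is a boundary. -/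
def KoszulHVanish (f : Fin M → MvPolynomial σ K) (dg : Fin M → ℕ)
    (i d : ℕ) : Prop :=
  ∀ v : KIdx M i → MvPolynomial σ K, KChainHom dg i v d → IsKCycle f i v →
    ∃ w : KIdx M (i + 1) → MvPolynomial σ K, koszulD f i w = v

/-- The sum `∑ v_j f_j` of which syzygies are the kernel. -/
noncomputable def syzSum (f v : Fin M → MvPolynomial σ K) : MvPolynomial σ K :=
  ∑ j : Fin M, v j * f j

/-- The module of trivial (Koszul) syzygies of `f`. -/
noncomputable def trivSyz (f : Fin M → MvPolynomial σ K) :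
    Submodule (MvPolynomial σ K) (Fin M → MvPolynomial σ K) :=
  Submodule.span (MvPolynomial σ K)
    {w | ∃ i j : Fin M, i < j ∧ w = Pi.single j (f i) - Pi.single i (f j)}

/-- A tuple `v` is homogeneous of degree `e` as an element of `⊕ R(-dg j)`. -/
def TupleHom (dg : Fin M → ℕ) (v : Fin M → MvPolynomial σ K) (e : ℕ) : Prop :=
  ∀ j : Fin M, (v j).IsHomogeneous (e - dg j) ∧ (e < dg j → v j = 0)

end Koszul

end GBPaper

namespace GBPaper

/-- The top part `h|_{y=0}` of a homogeneous polynomial in `R' = R[y]`,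
viewed as an element of `R = K[x_1,…,x_n]`. -/
noncomputable def topPartR {K : Type*} [Field K] {n : ℕ}
    (g : MvPolynomial (Fin (n + 1)) K) : MvPolynomial (Fin n) K :=
  MvPolynomial.aeval (Fin.lastCases 0 fun i => MvPolynomial.X i) g

end GBPaper

open GBPaper

/-!
Induct on the largest index `i` with `v i ≠ 0`. The relation `∑ v j * f j = 0` puts `v i * f i`
in `(f j)_{j < i}`, and `deg (v i * f i) = e < d`, so `d`-regularity gives
`v i = ∑_{j < i} g j * f j` with `g j` homogeneous. Subtracting the trivial syzygy
`∑_j g j • (f j e_i - f i e_j)` clears the `i`-th entry and keeps the syzygy homogeneous of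
degree `e`.
-/

namespace GBPaper

section Syzygies

variable {K : Type*} [Field K] {σ : Type*} {M : ℕ}

attribute [local instance] MvPolynomial.gradedAlgebra in
theorem homogeneousComponent_mul_of_isHomogeneous {a : ℕ} (t : ℕ) (p : MvPolynomial σ K)
    {q : MvPolynomial σ K} (hq : q.IsHomogeneous a) :
    homogeneousComponent t (p * q) =
      if a ≤ t then homogeneousComponent (t - a) p * q else 0 := by
  simp only [← decomposition.decompose'_apply]
  exact DirectSum.coe_decompose_mul_of_right_mem (homogeneousSubmodule σ K) t hq

theorem syzSum_eq_linearCombination (f v : Fin M → MvPolynomial σ K) :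
    syzSum f v = Fintype.linearCombination (MvPolynomial σ K) f v := by
  simp [syzSum, Fintype.linearCombination_apply]

theorem syzSum_sub (f v w : Fin M → MvPolynomial σ K) :
    syzSum f (v - w) = syzSum f v - syzSum f w := by
  simp only [syzSum_eq_linearCombination, map_sub]

theorem single_sub_single_mem_trivSyz (f : Fin M → MvPolynomial σ K) (i j : Fin M) :
    Pi.single i (f j) - Pi.single j (f i) ∈ trivSyz f := by
  rcases lt_trichotomy j i with h | rfl | h
  · exact Submodule.subset_span ⟨j, i, h, rfl⟩
  · rw [sub_self]
    exact zero_mem _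
  · rw [← neg_sub]
    exact neg_mem (Submodule.subset_span ⟨i, j, h, rfl⟩)

theorem syzSum_eq_zero_of_mem_trivSyz {f v : Fin M → MvPolynomial σ K} (hv : v ∈ trivSyz f) :
    syzSum f v = 0 := by
  suffices trivSyz f ≤ LinearMap.ker (Fintype.linearCombination (MvPolynomial σ K) f) by
    simpa [syzSum_eq_linearCombination] using this hv
  refine Submodule.span_le.2 ?_
  rintro _ ⟨i, j, -, rfl⟩
  simp [Fintype.linearCombination_apply, Pi.single_apply, mul_sub, Finset.sum_sub_distrib,
    mul_comm]

theorem single_syzSum_sub_smul_mem_trivSyz (f g : Fin M → MvPolynomial σ K) (i : Fin M) :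
    Pi.single i (syzSum f g) - f i • g ∈ trivSyz f := by
  have hsum : Pi.single i (syzSum f g) - f i • g =
      ∑ j, g j • (Pi.single i (f j) - Pi.single j (f i)) := by
    simp only [smul_sub, Finset.sum_sub_distrib]
    congr 1 <;> ext l
    · rcases eq_or_ne l i with rfl | hl
      · simp [syzSum, Finset.sum_apply]
      · simp [Finset.sum_apply, hl]
    · simp [Finset.sum_apply, Pi.single_apply, mul_comm]
  rw [hsum]
  exact Submodule.sum_mem _ fun j _ =>
    Submodule.smul_mem _ _ (single_sub_single_mem_trivSyz f i j)

section TupleHom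

variable {dg : Fin M → ℕ} {v w : Fin M → MvPolynomial σ K} {e : ℕ}

theorem TupleHom.sub (hv : TupleHom dg v e) (hw : TupleHom dg w e) : TupleHom dg (v - w) e :=
  fun j => ⟨(hv j).1.sub (hw j).1, fun h => by simp [(hv j).2 h, (hw j).2 h]⟩

theorem TupleHom.single (hv : TupleHom dg v e) (i : Fin M) :
    TupleHom dg (Pi.single i (v i)) e := by
  intro j
  rcases eq_or_ne j i with rfl | hji
  · simpa using hv j
  · rw [Pi.single_eq_of_ne hji]
    exact ⟨isHomogeneous_zero _ _ _, fun _ => rfl⟩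

theorem TupleHom.smul {a : ℕ} {p : MvPolynomial σ K} (hv : TupleHom dg v e)
    (hp : p.IsHomogeneous a) : TupleHom dg (p • v) (e + a) := by
  intro j
  by_cases hj : e < dg j
  · refine ⟨?_, fun _ => ?_⟩ <;> simp [(hv j).2 hj, isHomogeneous_zero]
  · refine ⟨?_, fun h => by omega⟩
    rw [show e + a - dg j = a + (e - dg j) by omega]
    exact hp.mul (hv j).1

end TupleHom

theorem exists_tupleHom_syzSum_eq_of_mem_span {f : Fin M → MvPolynomial σ K} {dg : Fin M → ℕ}
    (hhom : ∀ j, (f j).IsHomogeneous (dg j)) {S : Set (Fin M)} {p : MvPolynomial σ K} {t : ℕ}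
    (hp : p.IsHomogeneous t) (hpS : p ∈ Ideal.span (f '' S)) :
    ∃ g, TupleHom dg g t ∧ (∀ j ∉ S, g j = 0) ∧ syzSum f g = p := by
  obtain ⟨l, hlS, rfl⟩ := (Finsupp.mem_span_image_iff_linearCombination _).1 hpS
  refine ⟨fun j => if dg j ≤ t then homogeneousComponent (t - dg j) (l j) else 0,
    fun j => ?_, fun j hj => ?_, ?_⟩
  · dsimp only
    split_ifs with h
    · exact ⟨homogeneousComponent_isHomogeneous _ _, fun h' => absurd h (by omega)⟩
    · exact ⟨isHomogeneous_zero _ _ _, fun _ => rfl⟩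
  · simp [(Finsupp.mem_supported' _ _).1 hlS j hj]
  · conv_rhs => rw [← homogeneousComponent_eq_self hp]
    simp only [Finsupp.linearCombination_apply, Finsupp.sum_fintype, smul_eq_mul, map_sum,
      homogeneousComponent_mul_of_isHomogeneous _ _ (hhom _), syzSum, ite_mul, zero_mul,
      implies_true]

theorem mul_mem_prevIdeal_of_syzSum_eq_zero {f v : Fin M → MvPolynomial σ K} {i : Fin M}
    (hsyz : syzSum f v = 0) (hvi : ∀ j, i < j → v j = 0) : v i * f i ∈ prevIdeal f i := by
  have hvf : v i * f i = -∑ j ∈ Finset.univ.erase i, v j * f j := by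
    have := Finset.add_sum_erase Finset.univ (fun j => v j * f j) (Finset.mem_univ i)
    rw [← syzSum, hsyz] at this
    linear_combination this
  rw [hvf]
  refine neg_mem (sum_mem fun j hj => ?_)
  rcases (Finset.ne_of_mem_erase hj).lt_or_gt with h | h
  · exact Ideal.mul_mem_left _ _ (Ideal.subset_span ⟨j, h, rfl⟩)
  · simp [hvi j h]

variable {f : Fin M → MvPolynomial σ K} {dg : Fin M → ℕ} {d : ℕ}

theorem IsDRegularSeq.exists_sub_mem_trivSyz (hhom : ∀ j, (f j).IsHomogeneous (dg j))
    (hreg : IsDRegularSeq f dg d) {e : ℕ} (he : e < d) {v : Fin M → MvPolynomial σ K}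
    (hv : TupleHom dg v e) (hsyz : syzSum f v = 0) {i : Fin M} (hvi : ∀ j, i < j → v j = 0) :
    ∃ w, TupleHom dg w e ∧ syzSum f w = 0 ∧ (∀ j, i ≤ j → w j = 0) ∧ v - w ∈ trivSyz f := by
  by_cases hei : e < dg i
  · refine ⟨v, hv, hsyz, fun j hj => ?_, by simp⟩
    rcases hj.eq_or_lt with rfl | h
    · exact (hv _).2 hei
    · exact hvi j h
  have hvi_mem : v i ∈ prevIdeal f i :=
    hreg i (v i) (e - dg i) (hv i).1 (by omega) (mul_mem_prevIdeal_of_syzSum_eq_zero hsyz hvi)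
  obtain ⟨g, hg, hgi, hgv⟩ := exists_tupleHom_syzSum_eq_of_mem_span hhom (hv i).1 hvi_mem
  -- `v i = ∑_{j < i} g j * f j`, so this trivial syzygy agrees with `v` at `i`
  have hu : Pi.single i (v i) - f i • g ∈ trivSyz f :=
    hgv ▸ single_syzSum_sub_smul_mem_trivSyz f g i
  refine ⟨v - (Pi.single i (v i) - f i • g), hv.sub ?_, ?_, fun j hj => ?_, by simpa using hu⟩
  · have hfg := hg.smul (hhom i)
    rw [Nat.sub_add_cancel (not_lt.1 hei)] at hfg
    exact (hv.single i).sub hfg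
  · rw [syzSum_sub, hsyz, syzSum_eq_zero_of_mem_trivSyz hu, sub_zero]
  · have hgj : g j = 0 := hgi j (not_lt.2 hj)
    rcases hj.eq_or_lt with rfl | h
    · simp [hgj]
    · simp [hvi j h, hgj, h.ne']

theorem IsDRegularSeq.mem_trivSyz_of_forall_le_val (hhom : ∀ j, (f j).IsHomogeneous (dg j))
    (hreg : IsDRegularSeq f dg d) {e : ℕ} (he : e < d) (k : ℕ) :
    ∀ v, TupleHom dg v e → syzSum f v = 0 → (∀ j : Fin M, k ≤ j.val → v j = 0) →
      v ∈ trivSyz f := by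
  induction k with
  | zero =>
    intro v _ _ hv0
    rw [show v = 0 from funext fun j => hv0 j (Nat.zero_le _)]
    exact zero_mem _
  | succ k ih =>
    intro v hv hsyz hvk
    by_cases hkM : k < M
    · obtain ⟨w, hw, hwsyz, hwk, hvw⟩ :=
        hreg.exists_sub_mem_trivSyz hhom he hv hsyz (i := ⟨k, hkM⟩) hvk
      simpa using add_mem (ih w hw hwsyz hwk) hvw
    · exact ih v hv hsyz fun j _ => absurd j.isLt (by omega)

end Syzygies

end GBPaper

theorem stmt19_general {K : Type*} [Field K] {n M : ℕ}
    (f : Fin M → MvPolynomial (Fin n) K) (dg : Fin M → ℕ)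
    (hhom : ∀ i, (f i).IsHomogeneous (dg i))
    (d : ℕ)
    (hreg : IsDRegularSeq f dg d) :
    ∀ e : ℕ, e < d → ∀ v : Fin M → MvPolynomial (Fin n) K,
      TupleHom dg v e → syzSum f v = 0 → v ∈ trivSyz f := by
  intro e he v hv hsyz
  exact hreg.mem_trivSyz_of_forall_le_val hhom he M v hv hsyz fun j hj =>
    absurd j.isLt (not_lt.2 hj)

/-- if a sequence of homogeneous polynomials of positive degrees
`dg i ≤ d` is `d`-regular, then every homogeneous syzygy of degree `< d` is a
trivial (Koszul) syzygy. -/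
theorem stmt19 {K : Type*} [Field K] {n M : ℕ}
    (f : Fin M → MvPolynomial (Fin n) K) (dg : Fin M → ℕ)
    (hhom : ∀ i, (f i).IsHomogeneous (dg i)) (hpos : ∀ i, 0 < dg i)
    (d : ℕ) (hd : ∀ i, dg i ≤ d)
    (hreg : IsDRegularSeq f dg d) :
    ∀ e : ℕ, e < d → ∀ v : Fin M → MvPolynomial (Fin n) K,
      TupleHom dg v e → syzSum f v = 0 → v ∈ trivSyz f :=
  stmt19_general f dg hhom d hreg
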